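/- Monotonic improvement of the determinant similarity in the noiseless case: Let 0 < d < n, let Ū and U_t be n×d matrices with orthonormal columns with det(Ūᵀ U_t) ≠ 0, and let the observation be x = v = Ū s for some s ∈ ℝ^d. Write v_∥ = U_t U_tᵀ v and v_⊥ = v − v_∥, and assume v_∥ ≠ 0 and v_⊥ ≠ 0. Apply one GROUSE update with step size θ = arctan(‖v_⊥‖/‖v_∥‖) (α = 0). Then ζ_{t+1}/ζ_t = 1 + ‖v_⊥‖²/‖v_∥‖². -/

import Mathlib

/-
With the greedy step θ = arctan(‖v_⊥‖/‖v_∥‖) one has cos θ = ‖v_∥‖/‖v‖ and sin θ = ‖v_⊥‖/‖v‖, so the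
GROUSE step turns the unit vector v_∥/‖v_∥‖ into v/‖v‖ and the update is the rank-one perturbation
U + (v/‖v‖ − v_∥/‖v_∥‖) wᵀ/‖w‖ with w = Uᵀ v. Since v = Ū s, we have w = (ŪᵀU)ᵀ s, and the matrix
determinant lemma gives det(Ūᵀ U_{t+1}) = det(Ūᵀ U) · (1 + (v ⬝ (v/‖v‖ − v_∥/‖v_∥‖))/‖w‖)
= det(Ūᵀ U) · ‖v‖/‖v_∥‖. As ζ = det(Ūᵀ U)², the ratio is ‖v‖²/‖v_∥‖² = 1 + ‖v_⊥‖²/‖v_∥‖².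
-/

open Matrix

noncomputable def vnorm {m : Type*} [Fintype m] (x : m → ℝ) : ℝ :=
  Real.sqrt (∑ i, x i ^ 2)

/-- `U` has orthonormal columns. -/
def OrthonormalCols {n d : ℕ} (U : Matrix (Fin n) (Fin d) ℝ) : Prop :=
  Uᵀ * U = 1

/-- One GROUSE update with step angle `θ`: with `w = Uᵀ x`, `p = U w`, `r = x − p`,
`U⁺ = U + (cos θ · p/‖p‖ + sin θ · r/‖r‖ − p/‖p‖) wᵀ/‖w‖`. -/
noncomputable def grouseUpdate {n d : ℕ} (U : Matrix (Fin n) (Fin d) ℝ) (x : Fin n → ℝ)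
    (θ : ℝ) : Matrix (Fin n) (Fin d) ℝ :=
  let w : Fin d → ℝ := Uᵀ *ᵥ x
  let p : Fin n → ℝ := U *ᵥ w
  let r : Fin n → ℝ := x - p
  U + Matrix.of (fun i j =>
    ((Real.cos θ * (p i / vnorm p) + Real.sin θ * (r i / vnorm r)) - p i / vnorm p)
      * (w j / vnorm w))

/-- Determinant similarity `ζ = det(Ūᵀ U Uᵀ Ū)`. -/
noncomputable def zetaSim {n d : ℕ} (Ub U : Matrix (Fin n) (Fin d) ℝ) : ℝ :=
  (Ubᵀ * U * Uᵀ * Ub).det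

section vnorm

variable {m : Type*} [Fintype m]

lemma vnorm_sq (x : m → ℝ) : vnorm x ^ 2 = x ⬝ᵥ x := by
  rw [vnorm, Real.sq_sqrt (by positivity)]
  simp only [dotProduct, sq]

lemma vnorm_nonneg (x : m → ℝ) : 0 ≤ vnorm x :=
  Real.sqrt_nonneg _

lemma vnorm_eq_zero {x : m → ℝ} : vnorm x = 0 ↔ x = 0 := by
  rw [vnorm, Real.sqrt_eq_zero (by positivity),
    Finset.sum_eq_zero_iff_of_nonneg fun i _ => sq_nonneg (x i)]
  simp only [Finset.mem_univ, true_implies, sq_eq_zero_iff, funext_iff, Pi.zero_apply]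

lemma vnorm_pos {x : m → ℝ} (hx : x ≠ 0) : 0 < vnorm x :=
  (vnorm_nonneg x).lt_of_ne' (vnorm_eq_zero.not.mpr hx)

lemma vnorm_mul_inv_smul (x : m → ℝ) : (vnorm x * (vnorm x)⁻¹) • x = x := by
  rcases eq_or_ne x 0 with rfl | hx
  · simp
  · rw [mul_inv_cancel₀ (vnorm_pos hx).ne', one_smul]

end vnorm

section OrthonormalCols

variable {n d : ℕ} {U : Matrix (Fin n) (Fin d) ℝ}

lemma OrthonormalCols.dotProduct_mulVec (hU : OrthonormalCols U) (x y : Fin d → ℝ) :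
    (U *ᵥ x) ⬝ᵥ (U *ᵥ y) = x ⬝ᵥ y := by
  rw [Matrix.dotProduct_mulVec, ← mulVec_transpose, mulVec_mulVec, hU, one_mulVec]

lemma OrthonormalCols.vnorm_mulVec (hU : OrthonormalCols U) (x : Fin d → ℝ) :
    vnorm (U *ᵥ x) = vnorm x := by
  rw [← sq_eq_sq₀ (vnorm_nonneg _) (vnorm_nonneg _), vnorm_sq, vnorm_sq, hU.dotProduct_mulVec]

lemma OrthonormalCols.dotProduct_proj (hU : OrthonormalCols U) (x : Fin n → ℝ) :
    x ⬝ᵥ (U *ᵥ (Uᵀ *ᵥ x)) = vnorm (U *ᵥ (Uᵀ *ᵥ x)) ^ 2 := by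
  rw [vnorm_sq, hU.dotProduct_mulVec, Matrix.dotProduct_mulVec, ← mulVec_transpose]

lemma OrthonormalCols.vnorm_sq_eq_proj_add (hU : OrthonormalCols U) (x : Fin n → ℝ) :
    vnorm x ^ 2 = vnorm (U *ᵥ (Uᵀ *ᵥ x)) ^ 2 + vnorm (x - U *ᵥ (Uᵀ *ᵥ x)) ^ 2 := by
  have hx := hU.dotProduct_proj x
  rw [vnorm_sq, vnorm_sq, vnorm_sq] at *
  rw [sub_dotProduct, dotProduct_sub, dotProduct_sub, dotProduct_comm (U *ᵥ (Uᵀ *ᵥ x)) x, hx]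
  ring

end OrthonormalCols

lemma Real.sqrt_one_add_div_sq {a : ℝ} (ha : 0 < a) (b : ℝ) :
    √(1 + (b / a) ^ 2) = √(a ^ 2 + b ^ 2) / a := by
  rw [div_pow, one_add_div (by positivity), Real.sqrt_div' _ (sq_nonneg a), Real.sqrt_sq ha.le,
    add_comm]

lemma Real.cos_arctan_div {a : ℝ} (ha : 0 < a) (b : ℝ) :
    Real.cos (Real.arctan (b / a)) = a / √(a ^ 2 + b ^ 2) := by
  rw [Real.cos_arctan, Real.sqrt_one_add_div_sq ha, one_div_div]

lemma Real.sin_arctan_div {a : ℝ} (ha : 0 < a) (b : ℝ) :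
    Real.sin (Real.arctan (b / a)) = b / √(a ^ 2 + b ^ 2) := by
  rw [Real.sin_arctan, Real.sqrt_one_add_div_sq ha, div_div_div_cancel_right₀ ha.ne']

lemma grouseUpdate_eq_add_replicateCol_mul_replicateRow {n d : ℕ}
    (U : Matrix (Fin n) (Fin d) ℝ) (x : Fin n → ℝ) (θ : ℝ) :
    grouseUpdate U x θ = U + replicateCol Unit
      (Real.cos θ • (vnorm (U *ᵥ (Uᵀ *ᵥ x)))⁻¹ • (U *ᵥ (Uᵀ *ᵥ x))
        + Real.sin θ • (vnorm (x - U *ᵥ (Uᵀ *ᵥ x)))⁻¹ • (x - U *ᵥ (Uᵀ *ᵥ x))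
        - (vnorm (U *ᵥ (Uᵀ *ᵥ x)))⁻¹ • (U *ᵥ (Uᵀ *ᵥ x)))
      * replicateRow Unit ((vnorm (Uᵀ *ᵥ x))⁻¹ • (Uᵀ *ᵥ x)) := by
  ext i j
  simp only [grouseUpdate, Matrix.add_apply, of_apply, mul_apply, Finset.univ_unique,
    Finset.sum_singleton, replicateCol_apply, replicateRow_apply, Pi.add_apply, Pi.sub_apply,
    Pi.smul_apply, smul_eq_mul]
  ring

lemma grouseUpdate_arctan {n d : ℕ} {U : Matrix (Fin n) (Fin d) ℝ} (hU : OrthonormalCols U)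
    {x : Fin n → ℝ} (hp : U *ᵥ (Uᵀ *ᵥ x) ≠ 0) :
    grouseUpdate U x
        (Real.arctan (vnorm (x - U *ᵥ (Uᵀ *ᵥ x)) / vnorm (U *ᵥ (Uᵀ *ᵥ x)))) =
      U + replicateCol Unit ((vnorm x)⁻¹ • x - (vnorm (U *ᵥ (Uᵀ *ᵥ x)))⁻¹ • (U *ᵥ (Uᵀ *ᵥ x)))
        * replicateRow Unit ((vnorm (Uᵀ *ᵥ x))⁻¹ • (Uᵀ *ᵥ x)) := by
  rw [grouseUpdate_eq_add_replicateCol_mul_replicateRow]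
  set p := U *ᵥ (Uᵀ *ᵥ x)
  have hpos : 0 < vnorm p := vnorm_pos hp
  have hx : √(vnorm p ^ 2 + vnorm (x - p) ^ 2) = vnorm x := by
    rw [← hU.vnorm_sq_eq_proj_add, Real.sqrt_sq (vnorm_nonneg x)]
  have hdir : Real.cos (Real.arctan (vnorm (x - p) / vnorm p)) • (vnorm p)⁻¹ • p
      + Real.sin (Real.arctan (vnorm (x - p) / vnorm p)) • (vnorm (x - p))⁻¹ • (x - p)
      = (vnorm x)⁻¹ • x :=
    calc _ = (vnorm x)⁻¹ • ((vnorm p * (vnorm p)⁻¹) • p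
          + (vnorm (x - p) * (vnorm (x - p))⁻¹) • (x - p)) := by
          rw [Real.cos_arctan_div hpos, Real.sin_arctan_div hpos, hx]
          module
      _ = (vnorm x)⁻¹ • x := by rw [vnorm_mul_inv_smul, vnorm_mul_inv_smul, add_sub_cancel]
  rw [hdir]

lemma Matrix.det_transpose_mul_add_replicateCol_mul_replicateRow {m n R : Type*} [Fintype m]
    [Fintype n] [DecidableEq n] [CommRing R] {V U : Matrix m n R} (hM : IsUnit (Vᵀ * U).det)
    {x : m → R} {s : n → R} (hx : x = V *ᵥ s) (a : m → R) (c : R) :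
    (Vᵀ * (U + replicateCol Unit a * replicateRow Unit (c • (Uᵀ *ᵥ x)))).det
      = (Vᵀ * U).det * (1 + c * (x ⬝ᵥ a)) := by
  have hrow : (c • (Uᵀ *ᵥ x)) ᵥ* (Vᵀ * U)⁻¹ = c • s := by
    rw [hx, mulVec_mulVec, ← vecMul_transpose, transpose_mul, transpose_transpose, smul_vecMul,
      vecMul_vecMul, mul_nonsing_inv _ hM, vecMul_one]
  rw [Matrix.mul_add, ← Matrix.mul_assoc, ← replicateCol_mulVec,
    det_add_replicateCol_mul_replicateRow hM, ← replicateRow_vecMul, hrow]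
  congr 1
  rw [det_unique]
  simp only [add_apply, one_apply_eq, replicateRow_mul_replicateCol_apply,
    Matrix.dotProduct_mulVec, vecMul_transpose, mulVec_smul, ← hx, smul_dotProduct, smul_eq_mul]

lemma zetaSim_eq_det_sq {n d : ℕ} (Ub U : Matrix (Fin n) (Fin d) ℝ) :
    zetaSim Ub U = (Ubᵀ * U).det ^ 2 := by
  rw [zetaSim, Matrix.mul_assoc _ Uᵀ, det_mul, ← transpose_transpose Ub, ← transpose_mul,
    det_transpose, transpose_transpose, sq]

lemma det_transpose_mul_grouseUpdate_arctan {n d : ℕ} {Ub U : Matrix (Fin n) (Fin d) ℝ}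
    (hU : OrthonormalCols U) (hdet : (Ubᵀ * U).det ≠ 0) {x : Fin n → ℝ} {s : Fin d → ℝ}
    (hx : x = Ub *ᵥ s) (hp : U *ᵥ (Uᵀ *ᵥ x) ≠ 0) :
    (Ubᵀ * grouseUpdate U x
        (Real.arctan (vnorm (x - U *ᵥ (Uᵀ *ᵥ x)) / vnorm (U *ᵥ (Uᵀ *ᵥ x))))).det
      = (Ubᵀ * U).det * (vnorm x / vnorm (U *ᵥ (Uᵀ *ᵥ x))) := by
  rw [grouseUpdate_arctan hU hp,
    det_transpose_mul_add_replicateCol_mul_replicateRow (isUnit_iff_ne_zero.mpr hdet) hx,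
    ← hU.vnorm_mulVec (Uᵀ *ᵥ x)]
  congr 1
  set p := U *ᵥ (Uᵀ *ᵥ x)
  have hp0 : vnorm p ≠ 0 := (vnorm_pos hp).ne'
  have hx0 : vnorm x ≠ 0 := vnorm_eq_zero.not.mpr fun h => hp (by simp [p, h])
  have hxx : x ⬝ᵥ x = vnorm x ^ 2 := (vnorm_sq x).symm
  rw [dotProduct_sub, dotProduct_smul, dotProduct_smul, hxx, hU.dotProduct_proj, smul_eq_mul,
    smul_eq_mul]
  field_simp
  ring

theorem zeta_monotone_noiseless_general {n d : ℕ}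
    (Ub U : Matrix (Fin n) (Fin d) ℝ)
    (hU : OrthonormalCols U)
    (hdet : (Ubᵀ * U).det ≠ 0)
    (s : Fin d → ℝ) (v : Fin n → ℝ) (hv : v = Ub *ᵥ s)
    (vpar vperp : Fin n → ℝ)
    (hvpar : vpar = U *ᵥ (Uᵀ *ᵥ v)) (hvperp : vperp = v - vpar)
    (hpar : vpar ≠ 0) :
    zetaSim Ub (grouseUpdate U v (Real.arctan (vnorm vperp / vnorm vpar)))
        / zetaSim Ub U
      = 1 + vnorm vperp ^ 2 / vnorm vpar ^ 2 := by
  subst hvperp hvpar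
  rw [zetaSim_eq_det_sq, zetaSim_eq_det_sq, det_transpose_mul_grouseUpdate_arctan hU hdet hv hpar,
    mul_pow, mul_div_cancel_left₀ _ (pow_ne_zero 2 hdet), div_pow, hU.vnorm_sq_eq_proj_add,
    add_div, div_self (pow_ne_zero 2 (vnorm_pos hpar).ne')]

/-- **Monotonic improvement of the determinant similarity, noiseless case.**
With observation `v = Ū s`, projection `v_∥ = U Uᵀ v ≠ 0`, residual `v_⊥ = v − v_∥ ≠ 0`,
and the greedy step `θ = arctan(‖v_⊥‖/‖v_∥‖)`, one GROUSE update yields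
`ζ_{t+1}/ζ_t = 1 + ‖v_⊥‖²/‖v_∥‖²`. -/
theorem zeta_monotone_noiseless {n d : ℕ} (hd : 0 < d) (hdn : d < n)
    (Ub U : Matrix (Fin n) (Fin d) ℝ)
    (hUb : OrthonormalCols Ub) (hU : OrthonormalCols U)
    (hdet : (Ubᵀ * U).det ≠ 0)
    (s : Fin d → ℝ) (v : Fin n → ℝ) (hv : v = Ub *ᵥ s)
    (vpar vperp : Fin n → ℝ)
    (hvpar : vpar = U *ᵥ (Uᵀ *ᵥ v)) (hvperp : vperp = v - vpar)
    (hpar : vpar ≠ 0) (hperp : vperp ≠ 0) :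
    zetaSim Ub (grouseUpdate U v (Real.arctan (vnorm vperp / vnorm vpar)))
        / zetaSim Ub U
      = 1 + vnorm vperp ^ 2 / vnorm vpar ^ 2 :=
  zeta_monotone_noiseless_general Ub U hU hdet s v hv vpar vperp hvpar hvperp hpar
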